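/- arXiv:1505.03402 — 4 statements merged into one kernel-verified Lean document; each statement's English description precedes it below -/
import Mathlib

section
/- If a triangle has side lengths ‖a‖ ≤ ‖b‖ ≤ ‖c‖, is non-obtuse, and γ is the angle opposite c, then arccos(‖a‖/(2‖b‖)) ≤ γ ≤ π/2. -/
open Real

theorem gamma_range_nonobtuse (a b c α β γ : ℝ)
    (ha : 0 < a) (hab : a ≤ b) (hbc : b ≤ c)
    (hα : 0 < α) (hβ : 0 < β) (hγ : 0 < γ)
    (hsum : α + β + γ = π)
    (hα2 : α ≤ π / 2) (hβ2 : β ≤ π / 2) (hγ2 : γ ≤ π / 2)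
    (hlaw : c ^ 2 = a ^ 2 + b ^ 2 - 2 * a * b * Real.cos γ) :
    Real.arccos (a / (2 * b)) ≤ γ ∧ γ ≤ π / 2 := by
  refine ⟨?_, hγ2⟩
  have hb : 0 < b := lt_of_lt_of_le ha hab
  have hcos : Real.cos γ ≤ a / (2 * b) := by
    rw [le_div_iff₀ (by positivity)]
    nlinarith [sq_nonneg (c - b), hbc, ha.le]
  have h1 : Real.arccos (a / (2 * b)) ≤ Real.arccos (Real.cos γ) := by
    rcases eq_or_lt_of_le hcos with h | h
    · rw [h]
    · exact le_of_lt (Real.strictAntiOn_arccos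
        ⟨Real.neg_one_le_cos γ, hcos.trans (by
          rw [div_le_one (by positivity)]; linarith)⟩
        ⟨le_trans (Real.neg_one_le_cos γ) hcos, by
          rw [div_le_one (by positivity)]; linarith⟩ h)
  calc Real.arccos (a / (2 * b)) ≤ Real.arccos (Real.cos γ) := h1
    _ = γ := Real.arccos_cos hγ.le (by linarith [Real.pi_pos])
end

section
/- If cos(φ₁/2) = a/(2ρ), cos(φ₂/2) = b/(2ρ), φ₁, φ₂ ∈ (0, π), and φ₁ + φ₂ = π/2, then ρ² = (a² + b² − √2·a·b)/2. -/
open Real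

theorem equilibrium_radius_four_arcs (a b ρ φ₁ φ₂ : ℝ)
    (ha : 0 < a) (hb : 0 < b) (hρ : 0 < ρ)
    (ha' : a < 2 * ρ) (hb' : b < 2 * ρ)
    (hφ₁ : φ₁ ∈ Set.Ioo 0 π) (hφ₂ : φ₂ ∈ Set.Ioo 0 π)
    (h1 : Real.cos (φ₁ / 2) = a / (2 * ρ))
    (h2 : Real.cos (φ₂ / 2) = b / (2 * ρ))
    (hsum : φ₁ + φ₂ = π / 2) :
    ρ ^ 2 = (a ^ 2 + b ^ 2 - Real.sqrt 2 * a * b) / 2 := by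
  have hφ₂eq : φ₂ / 2 = π / 4 - φ₁ / 2 := by linarith
  set s := Real.sin (φ₁ / 2) with hs
  set c := Real.cos (φ₁ / 2) with hc
  have hρ' : (2 * ρ) ≠ 0 := by positivity
  have hA : a = 2 * ρ * c := by rw [show (2:ℝ) * ρ * c = 2 * ρ * (a / (2*ρ)) from by rw [h1]]; field_simp
  have hB : b = 2 * ρ * Real.cos (φ₂ / 2) := by rw [h2]; field_simp
  have hC : Real.cos (φ₂ / 2) = Real.sqrt 2 / 2 * c + Real.sqrt 2 / 2 * s := by
    rw [hφ₂eq, Real.cos_sub, Real.cos_pi_div_four, Real.sin_pi_div_four]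
    try ring
  have h2sq : Real.sqrt 2 ^ 2 = 2 := Real.sq_sqrt (by norm_num)
  have key : Real.sqrt 2 * b = a + 2 * ρ * s := by
    rw [hB, hC, hA]
    linear_combination (ρ * c + ρ * s) * h2sq
  have hpyth : s ^ 2 + c ^ 2 = 1 := Real.sin_sq_add_cos_sq _
  have h4 : (Real.sqrt 2 * b - a) ^ 2 = (2 * ρ) ^ 2 - a ^ 2 := by
    rw [show Real.sqrt 2 * b - a = 2 * ρ * s from by linarith [key]]
    rw [hA]
    linear_combination (4 * ρ ^ 2) * hpyth
  linear_combination (-1/4) * h4 + (b ^ 2 / 4) * h2sq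
end

section
/- The function f(a) = (2√2·a − a² − 1) / (a·√(1 − (√2 − (a²+1)/(2a))²)) is increasing on the interval (0,1] where defined, and attains its maximum at a = 1 with value √(2√2 − 2). -/
open Real

noncomputable def fourArcProb (a : ℝ) : ℝ :=
  (2 * Real.sqrt 2 * a - a ^ 2 - 1) /
    (a * Real.sqrt (1 - (Real.sqrt 2 - (a ^ 2 + 1) / (2 * a)) ^ 2))

lemma fourArcProb_eq (a : ℝ) (ha : 0 < a) :
    fourArcProb a = 2 * (Real.sqrt 2 - (a ^ 2 + 1) / (2 * a)) /
      Real.sqrt (1 - (Real.sqrt 2 - (a ^ 2 + 1) / (2 * a)) ^ 2) := by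
  unfold fourArcProb
  have hnum : 2 * Real.sqrt 2 * a - a ^ 2 - 1
      = a * (2 * (Real.sqrt 2 - (a ^ 2 + 1) / (2 * a))) := by
    field_simp
    ring
  rw [hnum, mul_div_mul_left _ _ (ne_of_gt ha)]

lemma mono_aux (s₁ s₂ : ℝ) (h1 : s₁ ^ 2 < 1) (h2 : s₂ ^ 2 < 1) (hlt : s₁ < s₂) :
    2 * s₁ / Real.sqrt (1 - s₁ ^ 2) < 2 * s₂ / Real.sqrt (1 - s₂ ^ 2) := by
  have hx : 0 < Real.sqrt (1 - s₁ ^ 2) := Real.sqrt_pos.2 (by linarith)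
  have hy : 0 < Real.sqrt (1 - s₂ ^ 2) := Real.sqrt_pos.2 (by linarith)
  have hx2 : Real.sqrt (1 - s₁ ^ 2) ^ 2 = 1 - s₁ ^ 2 := Real.sq_sqrt (by linarith)
  have hy2 : Real.sqrt (1 - s₂ ^ 2) ^ 2 = 1 - s₂ ^ 2 := Real.sq_sqrt (by linarith)
  rw [div_lt_div_iff₀ hx hy]
  set x := Real.sqrt (1 - s₁ ^ 2)
  set y := Real.sqrt (1 - s₂ ^ 2)
  have key : s₁ * y < s₂ * x := by
    rcases le_or_gt 0 s₁ with hs1 | hs1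
    · have hs2 : 0 < s₂ := lt_of_le_of_lt hs1 hlt
      have hsq : (s₁ * y) ^ 2 < (s₂ * x) ^ 2 := by
        have : s₁ ^ 2 < s₂ ^ 2 := by nlinarith
        nlinarith
      exact lt_of_pow_lt_pow_left₀ 2 (by positivity) hsq
    · rcases le_or_gt s₂ 0 with hs2 | hs2
      · have hsq : (-(s₂ * x)) ^ 2 < (-(s₁ * y)) ^ 2 := by
          have : s₂ ^ 2 < s₁ ^ 2 := by nlinarith
          nlinarith
        have := lt_of_pow_lt_pow_left₀ 2 (by nlinarith) hsq
        linarith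
      · have : s₁ * y < 0 := mul_neg_of_neg_of_pos hs1 hy
        have : 0 < s₂ * x := mul_pos hs2 hx
        linarith
  nlinarith

theorem fourArcProb_increasing_max :
    (∀ a₁ a₂ : ℝ, 0 < a₁ → a₁ ≤ 1 → 0 < a₂ → a₂ ≤ 1 →
      0 < 1 - (Real.sqrt 2 - (a₁ ^ 2 + 1) / (2 * a₁)) ^ 2 →
      0 < 1 - (Real.sqrt 2 - (a₂ ^ 2 + 1) / (2 * a₂)) ^ 2 →
      a₁ < a₂ → fourArcProb a₁ < fourArcProb a₂) ∧
    fourArcProb 1 = Real.sqrt (2 * Real.sqrt 2 - 2) := by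
  constructor
  · intro a₁ a₂ h1 h1' h2 h2' hp1 hp2 hlt
    rw [fourArcProb_eq a₁ h1, fourArcProb_eq a₂ h2]
    apply mono_aux _ _ (by linarith) (by linarith)
    have hts : (a₂ ^ 2 + 1) / (2 * a₂) < (a₁ ^ 2 + 1) / (2 * a₁) := by
      rw [div_lt_div_iff₀ (by linarith) (by linarith)]
      have hab : a₁ * a₂ < 1 := by nlinarith
      nlinarith [mul_pos (sub_pos.2 hlt) (sub_pos.2 hab)]
    linarith
  · rw [fourArcProb_eq 1 one_pos]
    have h2 : Real.sqrt 2 ^ 2 = 2 := Real.sq_sqrt (by norm_num)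
    have hval : 1 - (Real.sqrt 2 - (1 ^ 2 + 1) / (2 * 1)) ^ 2 = 2 * Real.sqrt 2 - 2 := by
      have : ((1 : ℝ) ^ 2 + 1) / (2 * 1) = 1 := by norm_num
      rw [this]
      nlinarith
    rw [hval]
    have hnum : 2 * (Real.sqrt 2 - (1 ^ 2 + 1) / (2 * 1)) = 2 * Real.sqrt 2 - 2 := by
      norm_num; ring
    rw [hnum, Real.div_sqrt]
end

section
/- If cos(φ₁/2) = a/(2ρ), cos(φ₂/2) = b/(2ρ), φ₁ + φ₂ + φ₃ = π/2, φᵢ ∈ (0,π), then sin φ₃ = 1 − (a·√(4ρ² − b²) + b·√(4ρ² − a²))²/(8ρ⁴). -/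
open Real

theorem sin_phi3_formula (a b ρ φ₁ φ₂ φ₃ : ℝ)
    (ha : 0 < a) (hb : 0 < b) (hρ : 0 < ρ)
    (ha' : a < 2 * ρ) (hb' : b < 2 * ρ)
    (hφ₁ : φ₁ ∈ Set.Ioo 0 π) (hφ₂ : φ₂ ∈ Set.Ioo 0 π) (hφ₃ : φ₃ ∈ Set.Ioo 0 π)
    (h1 : Real.cos (φ₁ / 2) = a / (2 * ρ))
    (h2 : Real.cos (φ₂ / 2) = b / (2 * ρ))
    (hsum : φ₁ + φ₂ + φ₃ = π / 2) :
    Real.sin φ₃ = 1 -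
      (a * Real.sqrt (4 * ρ ^ 2 - b ^ 2) + b * Real.sqrt (4 * ρ ^ 2 - a ^ 2)) ^ 2 /
        (8 * ρ ^ 4) := by
  obtain ⟨h1l, h1r⟩ := hφ₁
  obtain ⟨h2l, h2r⟩ := hφ₂
  have hs1 : 0 ≤ Real.sin (φ₁ / 2) := by
    apply Real.sin_nonneg_of_nonneg_of_le_pi <;> linarith
  have hs2 : 0 ≤ Real.sin (φ₂ / 2) := by
    apply Real.sin_nonneg_of_nonneg_of_le_pi <;> linarith
  have hp1 := Real.sin_sq_add_cos_sq (φ₁ / 2)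
  have hp2 := Real.sin_sq_add_cos_sq (φ₂ / 2)
  have e1 : Real.sqrt (4 * ρ ^ 2 - a ^ 2) = 2 * ρ * Real.sin (φ₁ / 2) := by
    rw [show 4 * ρ ^ 2 - a ^ 2 = (2 * ρ * Real.sin (φ₁ / 2)) ^ 2 by
      have : Real.cos (φ₁ / 2) * (2 * ρ) = a := by
        field_simp at h1; linarith
      nlinarith]
    exact Real.sqrt_sq (by positivity)
  have e2 : Real.sqrt (4 * ρ ^ 2 - b ^ 2) = 2 * ρ * Real.sin (φ₂ / 2) := by
    rw [show 4 * ρ ^ 2 - b ^ 2 = (2 * ρ * Real.sin (φ₂ / 2)) ^ 2 by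
      have : Real.cos (φ₂ / 2) * (2 * ρ) = b := by
        field_simp at h2; linarith
      nlinarith]
    exact Real.sqrt_sq (by positivity)
  have h3 : φ₃ = π / 2 - (φ₁ + φ₂) := by linarith
  rw [h3, Real.sin_pi_div_two_sub]
  have hadd : Real.sin ((φ₁ + φ₂) / 2)
      = Real.sin (φ₁ / 2) * Real.cos (φ₂ / 2) + Real.cos (φ₁ / 2) * Real.sin (φ₂ / 2) := by
    rw [show (φ₁ + φ₂) / 2 = φ₁ / 2 + φ₂ / 2 by ring, Real.sin_add]
  have hhalf : Real.cos (φ₁ + φ₂)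
      = 1 - 2 * (Real.sin (φ₁ / 2) * Real.cos (φ₂ / 2) + Real.cos (φ₁ / 2) * Real.sin (φ₂ / 2)) ^ 2 := by
    have hc := Real.cos_two_mul ((φ₁ + φ₂) / 2)
    rw [show 2 * ((φ₁ + φ₂) / 2) = φ₁ + φ₂ by ring] at hc
    have hp := Real.sin_sq_add_cos_sq ((φ₁ + φ₂) / 2)
    rw [hadd] at hp
    linarith
  have ha2 : a = 2 * ρ * Real.cos (φ₁ / 2) := by field_simp at h1; linarith
  have hb2 : b = 2 * ρ * Real.cos (φ₂ / 2) := by field_simp at h2; linarith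
  rw [e1, e2, ha2, hb2]
  rw [hhalf]
  have hρ4 : (8 : ℝ) * ρ ^ 4 ≠ 0 := by positivity
  field_simp
  ring
end
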